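/- Let M be a Beth-Kripke model, s a world, and i an agent. Then the set Γ = {φ : φ is a propositional formula and (M,s) ⊨ K_i φ} is deductively closed under intuitionistic propositional logic: for every propositional ψ, ψ ∈ Γ if and only if Γ ⊢_i ψ. -/

import Mathlib

/-- A path through `α`: a maximal chain containing `α`. -/
def IsPath {Q : Type} [PartialOrder Q] (α : Q) (P : Set Q) : Prop :=
  α ∈ P ∧ IsChain (· ≤ ·) P ∧ ∀ P' : Set Q, IsChain (· ≤ ·) P' → P ⊆ P' → P' = P

/-- A bar for `α`: a set meeting every path through `α`. -/
def IsBar {Q : Type} [PartialOrder Q] (α : Q) (B : Set Q) : Prop :=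
  ∀ P : Set Q, IsPath α P → (B ∩ P).Nonempty

/-- Epistemic formulas over agents `Ag` and atoms `At`. -/
inductive EForm (Ag At : Type) : Type
  | atom : At → EForm Ag At
  | and  : EForm Ag At → EForm Ag At → EForm Ag At
  | or   : EForm Ag At → EForm Ag At → EForm Ag At
  | imp  : EForm Ag At → EForm Ag At → EForm Ag At
  | neg  : EForm Ag At → EForm Ag At
  | know : Ag → EForm Ag At → EForm Ag At

/-- A Beth-Kripke model: a set of pointed (rooted) Beth worlds with accessibility
relations between worlds. -/
structure BK (Ag At : Type) where
  S : Type
  Node : S → Type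
  [ord : ∀ s, PartialOrder (Node s)]
  root : ∀ s, Node s
  root_le : ∀ (s : S) (β : Node s), root s ≤ β
  F : ∀ s, Node s → Set At
  F_mono : ∀ {s : S} {a b : Node s}, a ≤ b → F s a ⊆ F s b
  acc : Ag → S → S → Prop

attribute [instance] BK.ord

/-- Epistemic Beth forcing `α ⊩_M φ` at node `α` of world `s`. -/
def BK.force {Ag At : Type} (M : BK Ag At) : EForm Ag At → ∀ s : M.S, M.Node s → Prop
  | .atom p, s, α => ∃ B, IsBar α B ∧ ∀ β ∈ B, p ∈ M.F s β
  | .and A B, s, α => M.force A s α ∧ M.force B s α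
  | .or A B, s, α => ∃ Bb, IsBar α Bb ∧ ∀ β ∈ Bb, M.force A s β ∨ M.force B s β
  | .imp A B, s, α => ∀ β, α ≤ β → M.force A s β → M.force B s β
  | .neg A, s, α => ∀ β, α ≤ β → ¬ M.force A s β
  | .know i A, s, _ => ∀ t, M.acc i s t → ∀ β : M.Node t, M.force A t β

/-- Propositional (epistemic-operator-free) formulas over atoms `At`. -/
inductive PForm (At : Type) : Type
  | atom : At → PForm At
  | and  : PForm At → PForm At → PForm At
  | or   : PForm At → PForm At → PForm At
  | imp  : PForm At → PForm At → PForm At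
  | neg  : PForm At → PForm At

/-- Embedding of propositional formulas into the epistemic language. -/
def PForm.embed {Ag At : Type} : PForm At → EForm Ag At
  | .atom p => .atom p
  | .and A B => .and A.embed B.embed
  | .or A B => .or A.embed B.embed
  | .imp A B => .imp A.embed B.embed
  | .neg A => .neg A.embed

/-- Natural-deduction derivability in intuitionistic propositional logic,
`Γ ⊢_i φ`. -/
inductive IDeriv {At : Type} : Set (PForm At) → PForm At → Prop
  | hyp {Γ φ} : φ ∈ Γ → IDeriv Γ φ
  | andI {Γ φ ψ} : IDeriv Γ φ → IDeriv Γ ψ → IDeriv Γ (.and φ ψ)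
  | andE₁ {Γ φ ψ} : IDeriv Γ (.and φ ψ) → IDeriv Γ φ
  | andE₂ {Γ φ ψ} : IDeriv Γ (.and φ ψ) → IDeriv Γ ψ
  | orI₁ {Γ φ ψ} : IDeriv Γ φ → IDeriv Γ (.or φ ψ)
  | orI₂ {Γ φ ψ} : IDeriv Γ ψ → IDeriv Γ (.or φ ψ)
  | orE {Γ φ ψ χ} : IDeriv Γ (.or φ ψ) → IDeriv (insert φ Γ) χ →
      IDeriv (insert ψ Γ) χ → IDeriv Γ χ
  | impI {Γ φ ψ} : IDeriv (insert φ Γ) ψ → IDeriv Γ (.imp φ ψ)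
  | impE {Γ φ ψ} : IDeriv Γ (.imp φ ψ) → IDeriv Γ φ → IDeriv Γ ψ
  | negI {Γ φ ψ} : IDeriv (insert φ Γ) ψ → IDeriv (insert φ Γ) (.neg ψ) →
      IDeriv Γ (.neg φ)
  | negE {Γ φ ψ} : IDeriv Γ φ → IDeriv Γ (.neg φ) → IDeriv Γ ψ

/-! If every formula of `Γ` is known, then at every accessible world every node forces all of
`Γ`, so by soundness of intuitionistic logic for Beth forcing it forces every consequence of `Γ`.
Soundness rests on monotonicity of forcing and on the covering property (a formula forced on a
bar for `β` is forced at `β`); both come from lifting a bar for `a` to a bar for any `b ≥ a`,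
which uses Zorn's lemma to extend the part of a path above `b` to a path through `a`. -/

open Set

section Bars

variable {Q : Type} [PartialOrder Q] {a b : Q} {B P T : Set Q}

theorem IsMaxChain.isPath (hT : IsMaxChain (· ≤ ·) T) (ha : a ∈ T) : IsPath a T :=
  ⟨ha, hT.1, fun _ hP' hTP' => (hT.2 hP' hTP').symm⟩

theorem exists_isPath (a : Q) : ∃ P, IsPath a P := by
  obtain ⟨T, hT, haT⟩ := (subsingleton_singleton (a := a)).isChain.exists_maxChain
  exact ⟨T, hT.isPath (haT rfl)⟩

theorem IsPath.of_mem (hP : IsPath a P) (hb : b ∈ P) : IsPath b P :=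
  ⟨hb, hP.2⟩

theorem IsBar.nonempty (hB : IsBar a B) : B.Nonempty := by
  obtain ⟨P, hP⟩ := exists_isPath a
  exact (hB P hP).mono inter_subset_left

theorem isBar_singleton (a : Q) : IsBar a {a} :=
  fun _ hP => ⟨a, rfl, hP.1⟩

theorem IsBar.trans {S : Set Q} (hB : IsBar a B) (h : ∀ γ ∈ B, ∃ C, IsBar γ C ∧ C ⊆ S) :
    IsBar a S := by
  intro P hP
  obtain ⟨γ, hγB, hγP⟩ := hB P hP
  obtain ⟨C, hC, hCS⟩ := h γ hγB
  exact (hC P (hP.of_mem hγP)).mono (inter_subset_inter_left P hCS)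

theorem IsPath.mem_of_le {δ : Q} (hP : IsPath b P) (hT : IsChain (· ≤ ·) T)
    (hPT : {γ ∈ P | b ≤ γ} ⊆ T) (hδT : δ ∈ T) (hbδ : b ≤ δ) : δ ∈ P := by
  -- nodes of `P` below `b` lie below `δ`; those above `b` lie in the chain `T`, as does `δ`
  have hchain : IsChain (· ≤ ·) (insert δ P) := by
    refine hP.2.1.insert fun γ hγP _ => ?_
    rcases hP.2.1.total hγP hP.1 with hγb | hbγ
    · exact Or.inr (hγb.trans hbδ)
    · exact hT.total hδT (hPT ⟨hγP, hbγ⟩)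
  rw [← hP.2.2 _ hchain (subset_insert δ P)]
  exact mem_insert δ P

theorem IsBar.lift {U : Set Q} (hab : a ≤ b) (hB : IsBar a B) (hU : IsUpperSet U)
    (hBU : B ⊆ U) : IsBar b (Ici b ∩ U) := by
  intro P hP
  have hC : IsChain (· ≤ ·) (insert a {γ ∈ P | b ≤ γ}) :=
    (hP.2.1.mono (sep_subset P _)).insert fun _ hγ _ => Or.inl (hab.trans hγ.2)
  obtain ⟨T, hT, hCT⟩ := hC.exists_maxChain
  obtain ⟨δ, hδB, hδT⟩ := hB T (hT.isPath (hCT (mem_insert a _)))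
  rcases hT.1.total hδT (hCT (mem_insert_of_mem a ⟨hP.1, le_rfl⟩)) with hδb | hbδ
  · exact ⟨b, ⟨le_rfl, hU hδb (hBU hδB)⟩, hP.1⟩
  · exact ⟨δ, ⟨hbδ, hBU hδB⟩, hP.mem_of_le hT.1 ((subset_insert a _).trans hCT) hδT hbδ⟩

end Bars

namespace BK

variable {Ag At : Type} (M : BK Ag At)

theorem isUpperSet_force (A : EForm Ag At) (s : M.S) : IsUpperSet {β | M.force A s β} := by
  induction A with
  | atom p =>
    rintro a b hab ⟨B, hB, hF⟩
    exact ⟨_, hB.lift hab (fun _ _ h hp => M.F_mono h hp) hF, fun _ hγ => hγ.2⟩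
  | and A B ihA ihB => exact fun _ _ hab h => ⟨ihA hab h.1, ihB hab h.2⟩
  | or A B ihA ihB =>
    rintro a b hab ⟨Bb, hBb, hF⟩
    exact ⟨_, hBb.lift hab (ihA.union ihB) hF, fun _ hγ => hγ.2⟩
  | imp A B => exact fun _ _ hab h γ hbγ => h γ (hab.trans hbγ)
  | neg A => exact fun _ _ hab h γ hbγ => h γ (hab.trans hbγ)
  | know i A => exact fun _ _ _ h => h

theorem force_mono {A : EForm Ag At} {s : M.S} {a b : M.Node s} (hab : a ≤ b)
    (h : M.force A s a) : M.force A s b :=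
  M.isUpperSet_force A s hab h

theorem force_of_isBar {A : EForm Ag At} {s : M.S} {β : M.Node s} {D : Set (M.Node s)}
    (hB : IsBar β D) (hF : ∀ γ ∈ D, M.force A s γ) : M.force A s β := by
  induction A generalizing β D with
  | atom p => exact ⟨_, hB.trans fun γ hγ => hF γ hγ, fun _ h => h⟩
  | and A B ihA ihB => exact ⟨ihA hB fun γ hγ => (hF γ hγ).1, ihB hB fun γ hγ => (hF γ hγ).2⟩
  | or A B => exact ⟨_, hB.trans fun γ hγ => hF γ hγ, fun _ h => h⟩
  | imp A B _ ihB =>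
    intro δ hβδ hA
    refine ihB (hB.lift hβδ (M.isUpperSet_force (.imp A B) s) hF) ?_
    rintro γ ⟨hδγ, himp⟩
    exact himp γ le_rfl (M.force_mono hδγ hA)
  | neg A =>
    intro δ hβδ hA
    obtain ⟨γ, hδγ, hneg⟩ := (hB.lift hβδ (M.isUpperSet_force (.neg A) s) hF).nonempty
    exact hneg γ le_rfl (M.force_mono hδγ hA)
  | know i A =>
    obtain ⟨γ, hγ⟩ := hB.nonempty
    exact hF γ hγ

theorem force_or_elim {A B C : EForm Ag At} {s : M.S} {β : M.Node s}
    (h : M.force (.or A B) s β)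
    (hC : ∀ γ, β ≤ γ → M.force A s γ ∨ M.force B s γ → M.force C s γ) : M.force C s β := by
  obtain ⟨Bb, hBb, hF⟩ := h
  have hU : IsUpperSet {γ | M.force A s γ ∨ M.force B s γ} :=
    (M.isUpperSet_force A s).union (M.isUpperSet_force B s)
  exact M.force_of_isBar (hBb.lift le_rfl hU hF) fun γ hγ => hC γ hγ.1 hγ.2

def ForcesAll (Γ : Set (PForm At)) (s : M.S) (β : M.Node s) : Prop :=
  ∀ φ ∈ Γ, M.force φ.embed s β

variable {M}

theorem ForcesAll.mono {Γ : Set (PForm At)} {s : M.S} {a b : M.Node s}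
    (h : M.ForcesAll Γ s a) (hab : a ≤ b) : M.ForcesAll Γ s b :=
  fun φ hφ => M.force_mono hab (h φ hφ)

theorem ForcesAll.insert {Γ : Set (PForm At)} {φ : PForm At} {s : M.S} {β : M.Node s}
    (hΓ : M.ForcesAll Γ s β) (hφ : M.force φ.embed s β) : M.ForcesAll (insert φ Γ) s β := by
  rintro χ (rfl | hχ)
  exacts [hφ, hΓ χ hχ]

end BK

theorem IDeriv.sound {Ag At : Type} (M : BK Ag At) {Γ : Set (PForm At)} {ψ : PForm At}
    (h : IDeriv Γ ψ) {s : M.S} {β : M.Node s} (hΓ : M.ForcesAll Γ s β) :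
    M.force ψ.embed s β := by
  induction h generalizing β with
  | hyp hmem => exact hΓ _ hmem
  | andI _ _ ih₁ ih₂ => exact ⟨ih₁ hΓ, ih₂ hΓ⟩
  | andE₁ _ ih => exact (ih hΓ).1
  | andE₂ _ ih => exact (ih hΓ).2
  | orI₁ _ ih => exact ⟨{β}, isBar_singleton β, fun _ hγ => hγ ▸ Or.inl (ih hΓ)⟩
  | orI₂ _ ih => exact ⟨{β}, isBar_singleton β, fun _ hγ => hγ ▸ Or.inr (ih hΓ)⟩
  | orE _ _ _ ih ihφ ihψ =>
    refine M.force_or_elim (ih hΓ) fun γ hβγ hor => ?_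
    rcases hor with hφ | hψ
    exacts [ihφ ((hΓ.mono hβγ).insert hφ), ihψ ((hΓ.mono hβγ).insert hψ)]
  | impI _ ih => exact fun γ hβγ hφ => ih ((hΓ.mono hβγ).insert hφ)
  | impE _ _ ih₁ ih₂ => exact ih₁ hΓ β le_rfl (ih₂ hΓ)
  | negI _ _ ih₁ ih₂ =>
    intro γ hβγ hφ
    have hΓγ := (hΓ.mono hβγ).insert hφ
    exact ih₂ hΓγ γ le_rfl (ih₁ hΓγ)
  | negE _ _ ih₁ ih₂ => exact absurd (ih₁ hΓ) (ih₂ hΓ β le_rfl)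

theorem known_set_deductively_closed_general {Ag At : Type} (M : BK Ag At) (s : M.S)
    (i : Ag) :
    ∀ ψ : PForm At,
      ψ ∈ {φ : PForm At | M.force (.know i φ.embed) s (M.root s)} ↔
        IDeriv {φ : PForm At | M.force (.know i φ.embed) s (M.root s)} ψ :=
  fun _ => ⟨IDeriv.hyp, fun h t hst β => h.sound M fun _ hφ => hφ t hst β⟩

/-- the set of propositional formulas known by agent `i` at `(M,s)`
is a deductively closed intuitionistic theory. -/
theorem known_set_deductively_closed {Ag At : Type} (M : BK Ag At) (s : M.S)
    (i : Ag) (hrefl : ∀ t : M.S, M.acc i t t) :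
    ∀ ψ : PForm At,
      ψ ∈ {φ : PForm At | M.force (.know i φ.embed) s (M.root s)} ↔
        IDeriv {φ : PForm At | M.force (.know i φ.embed) s (M.root s)} ψ :=
  known_set_deductively_closed_general M s i
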